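/- (Spherical-code construction for the ERM lower bound, Lemma C.5.) Let d ≥ 1, 0 < ε < α, ε′ = sinh(ε), δ = √(cosh²(α) − 1), ρ ∈ (0, 1), and let v₁, …, v_T ∈ ℝ^d be unit vectors with ⟨v_i, v_j⟩ ≤ ρ·ε′·√(1 + δ²)/(δ·√(1 + ε′²)) for all i ≠ j. Set x₁ = (1, 0, …, 0) ∈ ℝ^{d+1}, x₂ = −x₁, w_t = (ε′, √(1 + ε′²)·v_t), x̃_{1,t} = (√(1 + δ²), δ·v_t), and x̃_{2,t} = −x̃_{1,t}. Then for every t ∈ {1, …, T}: (i) w_t ∗ w_t = −1; (ii) w_t ∗ x₁ = ε′ and w_t ∗ x₂ = −ε′, so w_t separates S = {(x₁, +1), (x₂, −1)} with hyperbolic margin exactly ε; (iii) x̃_{1,t} ∗ x̃_{1,t} = x̃_{2,t} ∗ x̃_{2,t} = 1 and x₁ ∗ x̃_{1,t} = x₂ ∗ x̃_{2,t} = cosh(α), so the adversarial perturbations have hyperbolic magnitude exactly α; (iv) w_t ∗ x̃_{1,t} < 0 and w_t ∗ x̃_{2,t} > 0, i.e., w_t misclassifies its own adversarial examples; (v) for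 every i ≠ t, w_t ∗ x̃_{1,i} > 0 and w_t ∗ x̃_{2,i} < 0, i.e., w_t correctly classifies all other adversarial examples. Hence there is an admissible run of adversarial training with ERM updates of length T in which every iterate has margin only ε on S. -/

import Mathlib

/-! Every vector in the construction has the form `(a, c·u)` with `u` a unit vector, so each
Minkowski product is `a b − c c' ⟪u, u'⟫`. Writing `ε' = sinh ε` and `δ = sinh α`, the classifier
`w_t = (sinh ε, cosh ε · v_t)` and the adversarial point `x̃_{1,t} = (cosh α, sinh α · v_t)` give
`w_t ∗ x̃_{1,i} = sinh ε cosh α − cosh ε sinh α ⟪v_t, v_i⟫`. For `i = t` this is `sinh (ε − α) < 0`;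
for `i ≠ t` the spherical-code bound makes the subtracted term at most `ρ sinh ε cosh α`, which
is smaller than the first term since `ρ < 1`. -/

open scoped RealInnerProductSpace

/-- The Minkowski product on ℝ^{d+1}: `x ∗ y = x₀ y₀ − ∑_{i=1}^d xᵢ yᵢ`. -/
noncomputable def mink {d : ℕ} (x y : Fin (d + 1) → ℝ) : ℝ :=
  x 0 * y 0 - ∑ i : Fin d, x i.succ * y i.succ

namespace Real

theorem sqrt_one_add_sinh_sq (x : ℝ) : √(1 + sinh x ^ 2) = cosh x := by
  rw [← cosh_sq', sqrt_sq (cosh_pos x).le]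

theorem sqrt_cosh_sq_sub_one {x : ℝ} (hx : 0 ≤ x) : √(cosh x ^ 2 - 1) = sinh x := by
  rw [cosh_sq, add_sub_cancel_right, sqrt_sq (sinh_nonneg_iff.mpr hx)]

theorem sinh_mul_cosh_sub_pos_of_le_div {ε α ρ r : ℝ} (hε : 0 < ε) (hα : 0 < α) (hρ : ρ < 1)
    (hr : r ≤ ρ * sinh ε * cosh α / (sinh α * cosh ε)) :
    0 < sinh ε * cosh α - cosh ε * sinh α * r := by
  rw [le_div_iff₀ (mul_pos (sinh_pos_iff.mpr hα) (cosh_pos ε))] at hr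
  have hρ_lt : ρ * (sinh ε * cosh α) < sinh ε * cosh α :=
    mul_lt_of_lt_one_left (mul_pos (sinh_pos_iff.mpr hε) (cosh_pos α)) hρ
  linarith

end Real

open Real

section Minkowski

variable {d : ℕ}

theorem mink_cons (a b : ℝ) (f g : Fin d → ℝ) :
    mink (Fin.cons a f) (Fin.cons b g) = a * b - ∑ i, f i * g i := by
  simp [mink]

theorem mink_cons_mul_cons_mul (a b c c' : ℝ) (u u' : EuclideanSpace ℝ (Fin d)) :
    mink (Fin.cons a fun k => c * u k) (Fin.cons b fun k => c' * u' k)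
      = a * b - c * c' * ⟪u, u'⟫ := by
  simp only [mink_cons, PiLp.inner_apply, Finset.mul_sum]
  congr 1
  refine Finset.sum_congr rfl fun k _ => ?_
  simp only [RCLike.inner_apply, conj_trivial]
  ring

theorem mink_neg_left (x y : Fin (d + 1) → ℝ) : mink (-x) y = -mink x y := by
  simp only [mink, Pi.neg_apply, neg_mul, Finset.sum_neg_distrib]
  ring

theorem mink_neg_right (x y : Fin (d + 1) → ℝ) : mink x (-y) = -mink x y := by
  simp only [mink, Pi.neg_apply, mul_neg, Finset.sum_neg_distrib]
  ring

theorem mink_sinh_cosh_self (a : ℝ) {u : EuclideanSpace ℝ (Fin d)} (hu : ‖u‖ = 1) :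
    mink (Fin.cons (sinh a) fun k => cosh a * u k) (Fin.cons (sinh a) fun k => cosh a * u k)
      = -1 := by
  rw [mink_cons_mul_cons_mul, inner_self_eq_one_of_norm_eq_one hu]
  linear_combination -cosh_sq_sub_sinh_sq a

theorem mink_cosh_sinh_self (a : ℝ) {u : EuclideanSpace ℝ (Fin d)} (hu : ‖u‖ = 1) :
    mink (Fin.cons (cosh a) fun k => sinh a * u k) (Fin.cons (cosh a) fun k => sinh a * u k)
      = 1 := by
  rw [mink_cons_mul_cons_mul, inner_self_eq_one_of_norm_eq_one hu]
  linear_combination cosh_sq_sub_sinh_sq a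

end Minkowski

theorem spherical_code_erm_lower_bound_general {d : ℕ}
    (ε α ρ : ℝ) (hε : 0 < ε) (hεα : ε < α) (hρ : ρ ∈ Set.Ioo (0 : ℝ) 1)
    (T : ℕ) (v : Fin T → EuclideanSpace ℝ (Fin d))
    (hv : ∀ i, ‖v i‖ = 1)
    (hcode : ∀ i j : Fin T, i ≠ j →
      ⟪v i, v j⟫ ≤ ρ * Real.sinh ε * Real.sqrt (1 + Real.sqrt (Real.cosh α ^ 2 - 1) ^ 2) /
        (Real.sqrt (Real.cosh α ^ 2 - 1) * Real.sqrt (1 + Real.sinh ε ^ 2))) :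
    ∀ t : Fin T,
      let ε' : ℝ := Real.sinh ε
      let δ : ℝ := Real.sqrt (Real.cosh α ^ 2 - 1)
      let x1 : Fin (d + 1) → ℝ := Fin.cons (1 : ℝ) (0 : Fin d → ℝ)
      let x2 : Fin (d + 1) → ℝ := -x1
      let w : Fin T → Fin (d + 1) → ℝ :=
        fun i => Fin.cons ε' (fun k => Real.sqrt (1 + ε' ^ 2) * v i k)
      let xt1 : Fin T → Fin (d + 1) → ℝ :=
        fun i => Fin.cons (Real.sqrt (1 + δ ^ 2)) (fun k => δ * v i k)
      let xt2 : Fin T → Fin (d + 1) → ℝ := fun i => -(xt1 i)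
      mink (w t) (w t) = -1 ∧
      mink (w t) x1 = ε' ∧
      mink (w t) x2 = -ε' ∧
      Real.arsinh ((1 : ℝ) * mink (w t) x1 / Real.sqrt (-(mink (w t) (w t)))) = ε ∧
      Real.arsinh ((-1 : ℝ) * mink (w t) x2 / Real.sqrt (-(mink (w t) (w t)))) = ε ∧
      mink (xt1 t) (xt1 t) = 1 ∧
      mink (xt2 t) (xt2 t) = 1 ∧
      mink x1 (xt1 t) = Real.cosh α ∧
      mink x2 (xt2 t) = Real.cosh α ∧
      mink (w t) (xt1 t) < 0 ∧
      0 < mink (w t) (xt2 t) ∧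
      (∀ i : Fin T, i ≠ t → 0 < mink (w t) (xt1 i) ∧ mink (w t) (xt2 i) < 0) := by
  intro t ε' δ x1 x2 w xt1 xt2
  have hα : 0 < α := hε.trans hεα
  have hδ : δ = sinh α := sqrt_cosh_sq_sub_one hα.le
  have hw : ∀ i, w i = Fin.cons (sinh ε) fun k => cosh ε * v i k := fun i => by
    simp only [w, ε', sqrt_one_add_sinh_sq]
  have hxt1 : ∀ i, xt1 i = Fin.cons (cosh α) fun k => sinh α * v i k := fun i => by
    simp only [xt1, hδ, sqrt_one_add_sinh_sq]
  have hwxt1 : ∀ i, mink (w t) (xt1 i) = sinh ε * cosh α - cosh ε * sinh α * ⟪v t, v i⟫ :=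
    fun i => by rw [hw, hxt1, mink_cons_mul_cons_mul]
  have hww : mink (w t) (w t) = -1 := by rw [hw]; exact mink_sinh_cosh_self ε (hv t)
  have hwx1 : mink (w t) x1 = ε' := by simp [hw, x1, ε', mink_cons]
  have hxx : mink (xt1 t) (xt1 t) = 1 := by rw [hxt1]; exact mink_cosh_sinh_self α (hv t)
  have hx1xt1 : mink x1 (xt1 t) = cosh α := by simp [hxt1, x1, mink_cons]
  have hown : mink (w t) (xt1 t) < 0 := by
    rw [hwxt1, inner_self_eq_one_of_norm_eq_one (hv t), mul_one, ← sinh_sub, sinh_neg_iff]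
    linarith
  have hother : ∀ i, i ≠ t → 0 < mink (w t) (xt1 i) := by
    intro i hi
    have hbound := hcode t i hi.symm
    rw [sqrt_cosh_sq_sub_one hα.le, sqrt_one_add_sinh_sq, sqrt_one_add_sinh_sq] at hbound
    rw [hwxt1]
    exact sinh_mul_cosh_sub_pos_of_le_div hε hα hρ.2 hbound
  refine ⟨hww, hwx1, by rw [mink_neg_right, hwx1], ?_, ?_, hxx, ?_, hx1xt1, ?_, hown, ?_, ?_⟩
  · simp [hww, hwx1, ε']
  · simp [hww, x2, mink_neg_right, hwx1, ε']
  · simp only [xt2, mink_neg_left, mink_neg_right, neg_neg, hxx]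
  · simp only [x2, xt2, mink_neg_left, mink_neg_right, neg_neg, hx1xt1]
  · simpa only [xt2, mink_neg_right, neg_pos] using hown
  · intro i hi
    simpa only [xt2, mink_neg_right, neg_lt_zero, and_self] using hother i hi

/-- Lemma C.5, spherical-code construction for the ERM lower bound.
Given `0 < ε < α`, `ε′ = sinh ε`, `δ = √(cosh²α − 1)`, `ρ ∈ (0,1)`, and a spherical
code `v₁, …, v_T` of unit vectors in ℝ^d with pairwise inner products at most
`ρ·ε′·√(1+δ²)/(δ·√(1+ε′²))`, the classifiers `w_t = (ε′, √(1+ε′²)·v_t)` and the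
adversarial points `x̃_{1,t} = (√(1+δ²), δ·v_t)`, `x̃_{2,t} = −x̃_{1,t}` satisfy:
(i) `w_t ∗ w_t = −1`; (ii) `w_t ∗ x₁ = ε′`, `w_t ∗ x₂ = −ε′`, so `w_t` separates
`S = {(x₁,+1),(x₂,−1)}` with hyperbolic margin exactly `ε`; (iii) the adversarial
points lie on `L^d` at hyperbolic distance exactly `α` from `x₁`, `x₂`;
(iv) `w_t` misclassifies its own adversarial examples; (v) `w_t` correctly
classifies all other adversarial examples. -/
theorem spherical_code_erm_lower_bound {d : ℕ} (hd : 1 ≤ d)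
    (ε α ρ : ℝ) (hε : 0 < ε) (hεα : ε < α) (hρ : ρ ∈ Set.Ioo (0 : ℝ) 1)
    (T : ℕ) (v : Fin T → EuclideanSpace ℝ (Fin d))
    (hv : ∀ i, ‖v i‖ = 1)
    (hcode : ∀ i j : Fin T, i ≠ j →
      ⟪v i, v j⟫ ≤ ρ * Real.sinh ε * Real.sqrt (1 + Real.sqrt (Real.cosh α ^ 2 - 1) ^ 2) /
        (Real.sqrt (Real.cosh α ^ 2 - 1) * Real.sqrt (1 + Real.sinh ε ^ 2))) :
    ∀ t : Fin T,
      let ε' : ℝ := Real.sinh ε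
      let δ : ℝ := Real.sqrt (Real.cosh α ^ 2 - 1)
      let x1 : Fin (d + 1) → ℝ := Fin.cons (1 : ℝ) (0 : Fin d → ℝ)
      let x2 : Fin (d + 1) → ℝ := -x1
      let w : Fin T → Fin (d + 1) → ℝ :=
        fun i => Fin.cons ε' (fun k => Real.sqrt (1 + ε' ^ 2) * v i k)
      let xt1 : Fin T → Fin (d + 1) → ℝ :=
        fun i => Fin.cons (Real.sqrt (1 + δ ^ 2)) (fun k => δ * v i k)
      let xt2 : Fin T → Fin (d + 1) → ℝ := fun i => -(xt1 i)
      mink (w t) (w t) = -1 ∧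
      mink (w t) x1 = ε' ∧
      mink (w t) x2 = -ε' ∧
      Real.arsinh ((1 : ℝ) * mink (w t) x1 / Real.sqrt (-(mink (w t) (w t)))) = ε ∧
      Real.arsinh ((-1 : ℝ) * mink (w t) x2 / Real.sqrt (-(mink (w t) (w t)))) = ε ∧
      mink (xt1 t) (xt1 t) = 1 ∧
      mink (xt2 t) (xt2 t) = 1 ∧
      mink x1 (xt1 t) = Real.cosh α ∧
      mink x2 (xt2 t) = Real.cosh α ∧
      mink (w t) (xt1 t) < 0 ∧
      0 < mink (w t) (xt2 t) ∧
      (∀ i : Fin T, i ≠ t → 0 < mink (w t) (xt1 i) ∧ mink (w t) (xt2 i) < 0) :=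
  spherical_code_erm_lower_bound_general ε α ρ hε hεα hρ T v hv hcode
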